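/- With E(t) the solution of B_t(E(t)) = 0, define F_0(t) = Σ_{n≥3} (1/n!) Σ_{i_1+...+i_n = n−3} (n−3)!/(i_1!···i_n!) · t_{i_1}···t_{i_n}. Then ∂²F_0 / ∂t_i ∂t_ℓ = E(t)^{i+ℓ+1} / (i! ℓ! (i+ℓ+1)) for all i, ℓ ≥ 0. In particular ∂²F_0/∂t_0² = E(t). -/

import Mathlib

/-!
Write `|d|` for the degree and `wt d = ∑ j d_j` for the weight of a monomial `t^d`, and
`W d = ∏ d_j! (j!)^{d_j}`. Series whose coefficients have the form `a(|d|, wt d) / W d` are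
stable under `∂/∂t_j`, which replaces `a` by `(n, w) ↦ a(n + 1, w + j) / j!`, because
`W (d + e_j) = (d_j + 1) j! W d`. `F₀` is such a series, with `a(n, w) = (n - 3)!` on `w + 3 = n`.
Reading off coefficients of `E^{m+1} = ∑_i t_i E^{i+m} / i!` and inducting on `|d|` shows that
`E^m` is one too, with `a(n, w) = m (n - 1)!` on `w + m = n` (Lagrange inversion); the induction
step is the identity `∑_j d_j (j + m) = wt d + m |d|`. For `m = i + ℓ + 1` the two numerators
agree up to the factor `i! ℓ! (i + ℓ + 1)`.
-/

/-- Formal partial derivative `∂/∂tⱼ` on `ℚ[[t₀, t₁, …]]`. -/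
noncomputable def pd (j : ℕ) (F : MvPowerSeries ℕ ℚ) : MvPowerSeries ℕ ℚ :=
  fun d => (d j + 1 : ℕ) • MvPowerSeries.coeff (R := ℚ) (d + Finsupp.single j 1) F

open MvPowerSeries Finsupp
open scoped Nat

lemma coeff_mul_eq_of_coeff_eq {σ R : Type*} [Semiring R] {F G H : MvPowerSeries σ R}
    {d : σ →₀ ℕ} (h : ∀ a ≤ d, coeff a F = coeff a G) : coeff d (F * H) = coeff d (G * H) := by
  classical
  simp only [coeff_mul]
  refine Finset.sum_congr rfl fun p hp => ?_
  rw [h p.1 (by rw [← Finset.HasAntidiagonal.mem_antidiagonal.1 hp]; exact le_self_add)]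

lemma coeff_X_mul {σ R : Type*} [Semiring R] (i : σ) (F : MvPowerSeries σ R) (d : σ →₀ ℕ) :
    coeff d (X i * F) = if single i 1 ≤ d then coeff (d - single i 1) F else 0 := by
  rw [X_def, coeff_monomial_mul, one_mul]

noncomputable def factorialWeight (d : ℕ →₀ ℕ) : ℕ :=
  d.prod fun j m => m ! * j ! ^ m

lemma factorialWeight_pos (d : ℕ →₀ ℕ) : 0 < factorialWeight d :=
  Finset.prod_pos fun _ _ => by positivity

lemma factorialWeight_add_single (d : ℕ →₀ ℕ) (j : ℕ) :
    factorialWeight (d + single j 1) = (d j + 1) * j ! * factorialWeight d := by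
  have h0 : ∀ i : ℕ, (0 : ℕ) ! * i ! ^ 0 = 1 := by simp
  unfold factorialWeight
  rw [← mul_prod_erase' _ j _ h0, ← mul_prod_erase' d j _ h0, erase_add, erase_single, add_zero]
  simp only [coe_add, Pi.add_apply, single_eq_same, Nat.factorial_succ, pow_succ]
  ring

lemma single_one_le_iff_mem_support {d : ℕ →₀ ℕ} {i : ℕ} : single i 1 ≤ d ↔ i ∈ d.support := by
  rw [single_le_iff, Nat.one_le_iff_ne_zero, mem_support_iff]

lemma sub_single_add_single {d : ℕ →₀ ℕ} {i : ℕ} (hi : i ∈ d.support) :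
    d - single i 1 + single i 1 = d :=
  tsub_add_cancel_of_le (single_one_le_iff_mem_support.2 hi)

lemma factorialWeight_eq_of_mem_support {d : ℕ →₀ ℕ} {i : ℕ} (hi : i ∈ d.support) :
    factorialWeight d = d i * i ! * factorialWeight (d - single i 1) := by
  have hdi : (d - single i 1 : ℕ →₀ ℕ) i + 1 = d i := by
    simpa using DFunLike.congr_fun (sub_single_add_single hi) i
  conv_lhs => rw [← sub_single_add_single hi]
  rw [factorialWeight_add_single, hdi]

lemma degree_sub_single_add_one {d : ℕ →₀ ℕ} {i : ℕ} (hi : i ∈ d.support) :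
    degree (d - single i 1) + 1 = degree d := by
  conv_rhs => rw [← sub_single_add_single hi]
  rw [map_add, degree_single]

lemma weight_sub_single_add {d : ℕ →₀ ℕ} {i : ℕ} (hi : i ∈ d.support) :
    weight id (d - single i 1) + i = weight id d := by
  conv_rhs => rw [← sub_single_add_single hi]
  rw [map_add, weight_single, one_smul, id]

lemma sum_support_mul_add (d : ℕ →₀ ℕ) (m : ℕ) :
    ∑ i ∈ d.support, d i * (i + m) = weight id d + m * degree d := by
  simp only [mul_add, Finset.sum_add_distrib, weight_apply, degree_apply, ← Finset.sum_mul,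
    Finsupp.sum, smul_eq_mul, id, mul_comm m]

lemma sum_mul_eq_weight (d : ℕ →₀ ℕ) : (d.sum fun i m => i * m) = weight id d := by
  simp only [weight_apply, smul_eq_mul, id, mul_comm]

noncomputable def ofDegreeWeight (a : ℕ → ℕ → ℚ) : MvPowerSeries ℕ ℚ :=
  fun d => a (degree d) (weight id d) / factorialWeight d

lemma coeff_ofDegreeWeight (a : ℕ → ℕ → ℚ) (d : ℕ →₀ ℕ) :
    coeff d (ofDegreeWeight a) = a (degree d) (weight id d) / factorialWeight d :=
  rfl

lemma smul_ofDegreeWeight (c : ℚ) (a : ℕ → ℕ → ℚ) :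
    c • ofDegreeWeight a = ofDegreeWeight fun n w => c * a n w := by
  ext d
  simp only [coeff_smul, coeff_ofDegreeWeight, mul_div_assoc]

lemma coeff_pd (j : ℕ) (F : MvPowerSeries ℕ ℚ) (d : ℕ →₀ ℕ) :
    coeff d (pd j F) = (d j + 1) * coeff (d + single j 1) F := by
  rw [coeff_apply, pd, nsmul_eq_mul, Nat.cast_succ]

lemma pd_smul (j : ℕ) (c : ℚ) (F : MvPowerSeries ℕ ℚ) : pd j (c • F) = c • pd j F := by
  ext d
  rw [coeff_pd, coeff_smul, coeff_smul, coeff_pd, mul_left_comm]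

lemma pd_ofDegreeWeight (j : ℕ) (a : ℕ → ℕ → ℚ) :
    pd j (ofDegreeWeight a) = (j ! : ℚ)⁻¹ • ofDegreeWeight fun n w => a (n + 1) (w + j) := by
  ext d
  rw [coeff_pd, smul_ofDegreeWeight, coeff_ofDegreeWeight, coeff_ofDegreeWeight, map_add, map_add,
    degree_single, weight_single, one_smul, id, factorialWeight_add_single]
  have hW := factorialWeight_pos d
  push_cast
  field_simp

def powNumerator (m n w : ℕ) : ℚ :=
  if w + m = n then if n = 0 then 1 else m * (n - 1)! else 0

lemma powNumerator_sub_single {d : ℕ →₀ ℕ} {i : ℕ} (hi : i ∈ d.support) (m : ℕ) :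
    powNumerator (i + m) (degree (d - single i 1)) (weight id (d - single i 1)) =
      if weight id d + (m + 1) = degree d then
        if degree d = 1 then 1 else (i + m : ℚ) * (degree d - 2)!
      else 0 := by
  have hn := degree_sub_single_add_one hi
  have hw := weight_sub_single_add hi
  unfold powNumerator
  by_cases hc : weight id d + (m + 1) = degree d
  · rw [if_pos (by omega), if_pos hc]
    by_cases hn1 : degree d = 1
    · rw [if_pos (by omega), if_pos hn1]
    · rw [if_neg (by omega), if_neg hn1,
        show degree (d - single i 1) - 1 = degree d - 2 by omega]
      push_cast
      rfl
  · rw [if_neg (by omega), if_neg hc]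

lemma sum_support_mul_powNumerator (d : ℕ →₀ ℕ) (m : ℕ) :
    ∑ i ∈ d.support, (d i : ℚ) *
        powNumerator (i + m) (degree (d - single i 1)) (weight id (d - single i 1)) =
      powNumerator (m + 1) (degree d) (weight id d) := by
  rw [Finset.sum_congr rfl fun i hi => by rw [powNumerator_sub_single hi m]]
  set n := degree d
  set w := weight id d
  unfold powNumerator
  by_cases hc : w + (m + 1) ≠ n
  · simp [hc]
  rw [not_not] at hc
  simp only [hc, if_true]
  by_cases hn1 : n = 1
  · have hm : m = 0 := by omega
    have hdeg : ∑ i ∈ d.support, (d i : ℚ) = 1 := by exact_mod_cast hn1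
    simp [hn1, hm, hdeg]
  obtain ⟨k, hk⟩ : ∃ k, n = k + 2 := ⟨n - 2, by omega⟩
  have hsum : ∑ i ∈ d.support, (d i : ℚ) * (i + m) = w + m * n := by
    exact_mod_cast sum_support_mul_add d m
  have hw : (w : ℚ) = k + 1 - m := by
    have : ((w + (m + 1) : ℕ) : ℚ) = (k + 2 : ℕ) := by rw [hc, hk]
    push_cast at this
    linarith
  simp only [hn1, show n ≠ 0 by omega, if_false, Nat.cast_succ]
  calc ∑ i ∈ d.support, (d i : ℚ) * ((i + m) * (n - 2)!)
      = (w + m * n) * (n - 2)! := by simp only [← mul_assoc, ← Finset.sum_mul, hsum]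
    _ = (m + 1) * (n - 1)! := by
      rw [hw, hk, show k + 2 - 1 = k + 1 by omega, Nat.add_sub_cancel, Nat.factorial_succ]
      push_cast
      ring

section FixedPoint

variable {E : MvPowerSeries ℕ ℚ}

lemma coeff_X_mul_pow_eq_zero (hE0 : constantCoeff E = 0) {d : ℕ →₀ ℕ} {i : ℕ}
    (h : degree d ≤ i) : coeff d (X i * E ^ i) = 0 := by
  apply coeff_of_lt_order
  calc ((degree d : ℕ) : ℕ∞) < 1 + i := by exact_mod_cast Nat.lt_one_add_iff.2 h
    _ ≤ (X i).order + (E ^ i).order :=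
      add_le_add (one_le_order_iff_constCoeff_eq_zero.2 (constantCoeff_X i))
        (le_order_pow_of_constantCoeff_eq_zero i hE0)
    _ ≤ _ := le_order_mul

lemma coeff_pow_succ_eq_sum_support (hE0 : constantCoeff E = 0)
    (hE : ∀ d, coeff d E =
      ∑ i ∈ Finset.range (degree d + 1), (i ! : ℚ)⁻¹ * coeff d (X i * E ^ i))
    (m : ℕ) (d : ℕ →₀ ℕ) :
    coeff d (E ^ (m + 1)) =
      ∑ i ∈ d.support, (i ! : ℚ)⁻¹ * coeff (d - single i 1) (E ^ (i + m)) := by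
  classical
  set s := Finset.range (degree d + 1) ∪ d.support
  have hEs : ∀ a ≤ d, coeff a E = coeff a (∑ i ∈ s, (i ! : ℚ)⁻¹ • (X i * E ^ i)) := by
    intro a ha
    simp only [hE a, map_sum, coeff_smul]
    refine Finset.sum_subset (fun i hi => Finset.mem_union_left _ ?_) fun i _ hi => ?_
    · simp only [Finset.mem_range] at hi ⊢
      have hda := degree_mono ha
      omega
    · rw [coeff_X_mul_pow_eq_zero hE0 (by simp only [Finset.mem_range] at hi; omega), mul_zero]
  calc coeff d (E ^ (m + 1))
      = coeff d ((∑ i ∈ s, (i ! : ℚ)⁻¹ • (X i * E ^ i)) * E ^ m) := by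
        rw [pow_succ', coeff_mul_eq_of_coeff_eq hEs]
    _ = ∑ i ∈ s, (i ! : ℚ)⁻¹ *
          if single i 1 ≤ d then coeff (d - single i 1) (E ^ (i + m)) else 0 := by
        simp only [Finset.sum_mul, smul_mul_assoc, mul_assoc, ← pow_add, map_sum, coeff_smul,
          coeff_X_mul]
    _ = ∑ i ∈ d.support, (i ! : ℚ)⁻¹ *
          if single i 1 ≤ d then coeff (d - single i 1) (E ^ (i + m)) else 0 := by
        refine (Finset.sum_subset Finset.subset_union_right fun i _ hi => ?_).symm
        rw [if_neg (mt single_one_le_iff_mem_support.1 hi), mul_zero]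
    _ = _ := Finset.sum_congr rfl fun i hi => by rw [if_pos (single_one_le_iff_mem_support.2 hi)]

theorem pow_eq_ofDegreeWeight (hE0 : constantCoeff E = 0)
    (hE : ∀ d, coeff d E =
      ∑ i ∈ Finset.range (degree d + 1), (i ! : ℚ)⁻¹ * coeff d (X i * E ^ i))
    (m : ℕ) : E ^ m = ofDegreeWeight (powNumerator m) := by
  ext d
  induction hn : degree d using Nat.strong_induction_on generalizing d m with
  | _ n ih =>
    rw [coeff_ofDegreeWeight]
    cases m with
    | zero =>
      by_cases hd : d = 0
      · simp [hd, powNumerator, factorialWeight]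
      · simp [coeff_one, hd, powNumerator, (degree_eq_zero_iff d).not.2 hd]
    | succ m =>
      rw [coeff_pow_succ_eq_sum_support hE0 hE, ← sum_support_mul_powNumerator, Finset.sum_div]
      refine Finset.sum_congr rfl fun i hi => ?_
      have hlt : degree (d - single i 1) < n := by
        have := degree_sub_single_add_one hi
        omega
      rw [ih _ hlt _ _ rfl, coeff_ofDegreeWeight, factorialWeight_eq_of_mem_support hi]
      have hW := factorialWeight_pos (d - single i 1)
      have hdi : (d i : ℚ) ≠ 0 := Nat.cast_ne_zero.2 (mem_support_iff.1 hi)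
      push_cast
      field_simp

end FixedPoint

def f0Numerator (n w : ℕ) : ℚ :=
  if w + 3 = n then (n - 3)! else 0

lemma pd_pd_ofDegreeWeight_f0Numerator (i ℓ : ℕ) :
    pd i (pd ℓ (ofDegreeWeight f0Numerator)) =
      ((i ! * ℓ ! * (i + ℓ + 1) : ℕ) : ℚ)⁻¹ • ofDegreeWeight (powNumerator (i + ℓ + 1)) := by
  rw [pd_ofDegreeWeight, pd_smul, pd_ofDegreeWeight, smul_smul, smul_ofDegreeWeight,
    smul_ofDegreeWeight]
  congr 1
  funext n w
  unfold f0Numerator powNumerator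
  by_cases hc : w + (i + ℓ + 1) = n
  · rw [if_pos (by omega), if_pos hc, if_neg (by omega), show n + 1 + 1 - 3 = n - 1 by omega]
    push_cast
    field_simp
  · rw [if_neg (by omega), if_neg hc, mul_zero, mul_zero]

/-- Let `E(t)` be the solution of `B_t(E(t)) = 0` with zero constant
term, and let `F₀(t) = ∑_{n≥3} (1/n!) ∑_{i₁+⋯+iₙ=n−3} ((n−3)!/(i₁!⋯iₙ!)) t_{i₁}⋯t_{iₙ}`
be the genus-zero free energy (given by its coefficients).  Then
`∂²F₀/∂tᵢ∂tₗ = E^{i+ℓ+1}/(i! ℓ! (i+ℓ+1))` for all `i, ℓ ≥ 0`; in particular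
`∂²F₀/∂t₀² = E(t)`. -/
theorem second_derivatives_of_F0
    (E : MvPowerSeries ℕ ℚ)
    (hE0 : MvPowerSeries.constantCoeff (σ := ℕ) (R := ℚ) E = 0)
    (hEeq : ∀ d : ℕ →₀ ℕ,
      MvPowerSeries.coeff (R := ℚ) d E =
        ∑ i ∈ Finset.range ((d.sum fun _ m => m) + 1),
          (i.factorial : ℚ)⁻¹ * MvPowerSeries.coeff (R := ℚ) d (MvPowerSeries.X i * E ^ i))
    (F0 : MvPowerSeries ℕ ℚ)
    (hF0 : ∀ d : ℕ →₀ ℕ,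
      MvPowerSeries.coeff (R := ℚ) d F0 =
        if (d.sum fun i m => i * m) + 3 = d.sum fun _ m => m then
          (((d.sum fun _ m => m) - 3).factorial : ℚ) /
            ((d.prod fun i m => m.factorial * i.factorial ^ m : ℕ) : ℚ)
        else 0) :
    (∀ i ℓ : ℕ, pd i (pd ℓ F0) =
      ((i.factorial * ℓ.factorial * (i + ℓ + 1) : ℕ) : ℚ)⁻¹ • E ^ (i + ℓ + 1)) ∧
    pd 0 (pd 0 F0) = E := by
  have hF : F0 = ofDegreeWeight f0Numerator := by
    ext d
    rw [hF0, coeff_ofDegreeWeight, f0Numerator, ite_div, zero_div, sum_mul_eq_weight]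
    rfl
  have key : ∀ i ℓ : ℕ, pd i (pd ℓ F0) =
      ((i.factorial * ℓ.factorial * (i + ℓ + 1) : ℕ) : ℚ)⁻¹ • E ^ (i + ℓ + 1) := by
    intro i ℓ
    rw [hF, pd_pd_ofDegreeWeight_f0Numerator, pow_eq_ofDegreeWeight hE0 hEeq]
  exact ⟨key, by simpa using key 0 0⟩
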